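/- arXiv:1204.1438 — 2 statements merged into one kernel-verified Lean document; each statement's English description precedes it below -/
import Mathlib

section
/- If G is a Roman graph (i.e., γ_R(G) = 2γ(G)) with maximum degree at least 2, then b_R(G) ≥ b(G). -/
open SimpleGraph Finset

/-- A Roman dominating function: values in {0,1,2}, every 0-vertex has a neighbor with value 2. -/
def IsRDF {V : Type*} (G : SimpleGraph V) (f : V → ℕ) : Prop :=
  (∀ v, f v ≤ 2) ∧ ∀ v, f v = 0 → ∃ u, G.Adj v u ∧ f u = 2

/-- The Roman domination number: minimum weight of a Roman dominating function. -/
noncomputable def romanDom {V : Type*} [Fintype V] (G : SimpleGraph V) : ℕ :=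
  sInf {k | ∃ f : V → ℕ, IsRDF G f ∧ ∑ v, f v = k}

/-- A dominating set. -/
def IsDomSet {V : Type*} (G : SimpleGraph V) (S : Set V) : Prop :=
  ∀ v, v ∈ S ∨ ∃ u ∈ S, G.Adj u v

/-- The domination number. -/
noncomputable def domNum {V : Type*} [Fintype V] (G : SimpleGraph V) : ℕ :=
  sInf {k | ∃ S : Set V, IsDomSet G S ∧ S.ncard = k}

/-- Degree of a vertex. -/
noncomputable def deg {V : Type*} (G : SimpleGraph V) (v : V) : ℕ :=
  (G.neighborSet v).ncard

/-- Maximum degree. -/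
noncomputable def maxDeg {V : Type*} (G : SimpleGraph V) : ℕ :=
  sSup {d | ∃ v, deg G v = d}

/-- Minimum degree. -/
noncomputable def minDeg {V : Type*} (G : SimpleGraph V) : ℕ :=
  sInf {d | ∃ v, deg G v = d}

/-- The Roman bondage number: minimum size of an edge set whose deletion increases `romanDom`. -/
noncomputable def romanBondage {V : Type*} [Fintype V] (G : SimpleGraph V) : ℕ :=
  sInf {k | ∃ B : Set (Sym2 V), B ⊆ G.edgeSet ∧
    romanDom (G.deleteEdges B) > romanDom G ∧ B.ncard = k}

/-- The bondage number: minimum size of an edge set whose deletion increases `domNum`. -/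
noncomputable def bondage {V : Type*} [Fintype V] (G : SimpleGraph V) : ℕ :=
  sInf {k | ∃ B : Set (Sym2 V), B ⊆ G.edgeSet ∧
    domNum (G.deleteEdges B) > domNum G ∧ B.ncard = k}

/-- A vertex cover. -/
def IsVC {V : Type*} (G : SimpleGraph V) (S : Set V) : Prop :=
  ∀ u v, G.Adj u v → u ∈ S ∨ v ∈ S

/-- The vertex covering number. -/
noncomputable def vcNum {V : Type*} [Fintype V] (G : SimpleGraph V) : ℕ :=
  sInf {k | ∃ S : Set V, IsVC G S ∧ S.ncard = k}

/-!
A vertex with two neighbours `u`, `w` carries a Roman dominating function of weight `n - 1`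
(`2` on the vertex, `0` on `u` and `w`, `1` elsewhere), while the edgeless graph has `γ_R = n`.
So some edge set raises `γ_R` (otherwise `romanBondage G` would be the junk value
`sInf ∅ = 0`), and a minimum one `B` exists. For it,
`2γ(G) = γ_R(G) < γ_R(G - B) ≤ 2γ(G - B)`, hence `B` raises `γ` as well.
-/

lemma exists_isDomSet_ncard_eq_domNum {V : Type*} [Fintype V] (G : SimpleGraph V) :
    ∃ S : Set V, IsDomSet G S ∧ S.ncard = domNum G :=
  Nat.sInf_mem (s := {k | ∃ S : Set V, IsDomSet G S ∧ S.ncard = k})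
    ⟨_, Set.univ, fun _ => Or.inl trivial, rfl⟩

lemma exists_isRDF_sum_eq_romanDom {V : Type*} [Fintype V] (G : SimpleGraph V) :
    ∃ f : V → ℕ, IsRDF G f ∧ ∑ v, f v = romanDom G :=
  Nat.sInf_mem (s := {k | ∃ f : V → ℕ, IsRDF G f ∧ ∑ v, f v = k})
    ⟨_, fun _ => 1, ⟨fun _ => by norm_num, fun _ h => absurd h one_ne_zero⟩, rfl⟩

lemma romanDom_le_sum {V : Type*} [Fintype V] {G : SimpleGraph V} {f : V → ℕ}
    (hf : IsRDF G f) : romanDom G ≤ ∑ v, f v :=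
  Nat.sInf_le ⟨f, hf, rfl⟩

lemma romanDom_le_two_mul_domNum {V : Type*} [Fintype V] (G : SimpleGraph V) :
    romanDom G ≤ 2 * domNum G := by
  classical
  obtain ⟨S, hS, hcard⟩ := exists_isDomSet_ncard_eq_domNum G
  let f : V → ℕ := fun v => if v ∈ S then 2 else 0
  have hf : IsRDF G f := by
    refine ⟨fun v => by simp only [f]; split_ifs <;> omega, fun v hv => ?_⟩
    rcases hS v with hvS | ⟨u, huS, huv⟩
    · simp [f, hvS] at hv
    · exact ⟨u, huv.symm, by simp [f, huS]⟩
  have hweight : ∑ v, f v = 2 * domNum G := by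
    simp [f, ← hcard, Finset.sum_ite, Set.ncard_eq_toFinset_card', mul_comm]
  exact hweight ▸ romanDom_le_sum hf

lemma card_le_romanDom_bot {V : Type*} [Fintype V] :
    Fintype.card V ≤ romanDom (⊥ : SimpleGraph V) := by
  obtain ⟨f, hf, hweight⟩ := exists_isRDF_sum_eq_romanDom (⊥ : SimpleGraph V)
  have hpos : ∀ v, 1 ≤ f v := fun v =>
    Nat.one_le_iff_ne_zero.mpr fun h0 => by simpa using hf.2 v h0
  simpa [← hweight] using Finset.sum_le_sum fun v (_ : v ∈ Finset.univ) => hpos v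

lemma exists_adj_adj_of_two_le_maxDeg {V : Type*} {G : SimpleGraph V} (h : 2 ≤ maxDeg G) :
    ∃ v u w, G.Adj v u ∧ G.Adj v w ∧ u ≠ w := by
  obtain ⟨v, hv⟩ : ∃ v, 2 ≤ deg G v := by
    by_contra! hlt
    have : maxDeg G ≤ 1 := csSup_le' fun _ ⟨v, hv⟩ => hv ▸ Nat.le_of_lt_succ (hlt v)
    omega
  have hfin : (G.neighborSet v).Finite := Set.finite_of_ncard_pos (by unfold deg at hv; omega)
  obtain ⟨u, hu, w, hw, huw⟩ := (Set.one_lt_ncard hfin).mp hv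
  exact ⟨v, u, w, hu, hw, huw⟩

lemma romanDom_lt_card_of_adj_adj {V : Type*} [Fintype V] {G : SimpleGraph V} {v u w : V}
    (hu : G.Adj v u) (hw : G.Adj v w) (huw : u ≠ w) : romanDom G < Fintype.card V := by
  classical
  let f : V → ℕ := fun x => if x = v then 2 else if x = u ∨ x = w then 0 else 1
  have hf : IsRDF G f := by
    refine ⟨fun x => by simp only [f]; split_ifs <;> omega, fun x hx => ⟨v, ?_, by simp [f]⟩⟩
    simp only [f] at hx
    split_ifs at hx with hxv hxuw
    rcases hxuw with rfl | rfl
    exacts [hu.symm, hw.symm]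
  -- summed over `V`, this reads `∑ f + 2 = n + 1`
  have hpointwise : ∀ x, f x + (if x = u then 1 else 0) + (if x = w then 1 else 0)
      = 1 + (if x = v then 1 else 0) := by
    intro x
    have := hu.ne; have := hw.ne
    simp only [f]; split_ifs <;> simp_all
  have hsum := Finset.sum_congr rfl fun x (_ : x ∈ Finset.univ) => hpointwise x
  simp only [Finset.sum_add_distrib, Finset.sum_ite_eq', Finset.mem_univ, if_true,
    Finset.sum_const, Finset.card_univ, smul_eq_mul, mul_one] at hsum
  have := romanDom_le_sum hf
  omega

lemma bondage_le_ncard {V : Type*} [Fintype V] {G : SimpleGraph V} {B : Set (Sym2 V)}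
    (hB : B ⊆ G.edgeSet) (hgt : domNum G < domNum (G.deleteEdges B)) : bondage G ≤ B.ncard :=
  Nat.sInf_le ⟨B, hB, hgt, rfl⟩

lemma exists_ncard_eq_romanBondage {V : Type*} [Fintype V] {G : SimpleGraph V}
    (h : ∃ B ⊆ G.edgeSet, romanDom G < romanDom (G.deleteEdges B)) :
    ∃ B ⊆ G.edgeSet, romanDom G < romanDom (G.deleteEdges B) ∧ B.ncard = romanBondage G := by
  obtain ⟨B, hB, hgt⟩ := h
  exact Nat.sInf_mem (s := {k | ∃ B : Set (Sym2 V), B ⊆ G.edgeSet ∧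
    romanDom (G.deleteEdges B) > romanDom G ∧ B.ncard = k}) ⟨_, B, hB, hgt, rfl⟩

lemma romanDom_lt_romanDom_deleteEdges_edgeSet {V : Type*} [Fintype V] {G : SimpleGraph V}
    (hΔ : 2 ≤ maxDeg G) : romanDom G < romanDom (G.deleteEdges G.edgeSet) := by
  obtain ⟨v, u, w, hu, hw, huw⟩ := exists_adj_adj_of_two_le_maxDeg hΔ
  rw [deleteEdges_edgeSet, sdiff_self]
  exact (romanDom_lt_card_of_adj_adj hu hw huw).trans_le card_le_romanDom_bot

theorem stmt10 {V : Type*} [Fintype V] (G : SimpleGraph V)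
    (hRoman : romanDom G = 2 * domNum G) (hΔ : 2 ≤ maxDeg G) :
    bondage G ≤ romanBondage G := by
  obtain ⟨B, hB, hgt, hcard⟩ := exists_ncard_eq_romanBondage
    ⟨G.edgeSet, subset_rfl, romanDom_lt_romanDom_deleteEdges_edgeSet hΔ⟩
  have hdom : 2 * domNum G < 2 * domNum (G.deleteEdges B) :=
    hRoman ▸ hgt.trans_le (romanDom_le_two_mul_domNum _)
  exact hcard ▸ bondage_le_ncard hB (by omega)
end

section
/- For every n ≥ 2, the Roman bondage number of the 2×n grid satisfies b_R(P_2 × P_n) = 2. -/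
/-!
Lower bound: along a strip of consecutive columns of the ladder that no edge leaves, a Roman
dominating function weighs at least one more than the number of columns. Peeling off the last
column proves this, provided every 2 just beyond the strip, which may dominate the last column
from outside, is credited with one unit.

Upper bound: put 2's on every other column, in rows alternating from one such column to the next,
and 1's on the boundary cells left undominated; this weighs n + 1. For each edge one of these
patterns has no 2 on it, so it survives the deletion of that edge. Deleting both rails between
the first two columns, however, cuts off a copy of K₂, which costs 2 on its own, from a ladder
on n - 1 columns, which costs n.
-/

open SimpleGraph Finset

section RomanDomination

variable {V : Type*}

theorem isRDF_one (G : SimpleGraph V) : IsRDF G fun _ => 1 :=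
  ⟨fun _ => one_le_two, fun _ h => absurd h one_ne_zero⟩

theorem romanDom_le [Fintype V] {G : SimpleGraph V} {f : V → ℕ} (hf : IsRDF G f) :
    romanDom G ≤ ∑ v, f v :=
  Nat.sInf_le ⟨f, hf, rfl⟩

theorem le_romanDom [Fintype V] {G : SimpleGraph V} {m : ℕ}
    (h : ∀ f, IsRDF G f → m ≤ ∑ v, f v) : m ≤ romanDom G :=
  le_csInf ⟨_, _, isRDF_one G, rfl⟩ fun _ ⟨f, hf, hk⟩ => hk ▸ h f hf

theorem IsRDF.deleteEdges {G : SimpleGraph V} {f : V → ℕ} (hf : IsRDF G f) {B : Set (Sym2 V)}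
    (hB : ∀ e ∈ B, ∀ v ∈ e, f v ≠ 2) : IsRDF (G.deleteEdges B) f := by
  refine ⟨hf.1, fun v hv => ?_⟩
  obtain ⟨u, hvu, hu⟩ := hf.2 v hv
  exact ⟨u, (deleteEdges_adj ..).2 ⟨hvu, fun he => hB _ he u (Sym2.mem_mk_right v u) hu⟩, hu⟩

theorem IsRDF.two_le_add {G : SimpleGraph V} {f : V → ℕ} (hf : IsRDF G f) {u v : V}
    (hu : ∀ w, G.Adj u w → w = v) (hv : ∀ w, G.Adj v w → w = u) : 2 ≤ f u + f v := by
  by_cases hu0 : f u = 0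
  · obtain ⟨w, huw, hw⟩ := hf.2 u hu0
    rw [hu w huw] at hw
    omega
  by_cases hv0 : f v = 0
  · obtain ⟨w, hvw, hw⟩ := hf.2 v hv0
    rw [hv w hvw] at hw
    omega
  omega

open Classical in
noncomputable def rdfOfSet (G : SimpleGraph V) (S : Set V) (v : V) : ℕ :=
  if v ∈ S then 2 else if ∃ u ∈ S, G.Adj v u then 0 else 1

variable {G : SimpleGraph V} {S : Set V} {v : V}

theorem isRDF_rdfOfSet (G : SimpleGraph V) (S : Set V) : IsRDF G (rdfOfSet G S) := by
  refine ⟨fun v => ?_, fun v hv => ?_⟩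
  · unfold rdfOfSet; split_ifs <;> omega
  · unfold rdfOfSet at hv
    split_ifs at hv with hS hN
    obtain ⟨u, hu, hvu⟩ := hN
    exact ⟨u, hvu, if_pos hu⟩

theorem rdfOfSet_eq_two_iff : rdfOfSet G S v = 2 ↔ v ∈ S := by
  unfold rdfOfSet; split_ifs <;> simp_all

theorem rdfOfSet_le_one (hv : v ∉ S) : rdfOfSet G S v ≤ 1 := by
  unfold rdfOfSet; split_ifs <;> simp_all

theorem rdfOfSet_eq_zero {u : V} (hv : v ∉ S) (hu : u ∈ S) (hvu : G.Adj v u) :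
    rdfOfSet G S v = 0 := by
  unfold rdfOfSet
  rw [if_neg hv, if_pos ⟨u, hu, hvu⟩]

theorem romanBondage_eq_two [Fintype V]
    (hone : ∀ e ∈ G.edgeSet, romanDom (G.deleteEdges {e}) ≤ romanDom G)
    {e₁ e₂ : Sym2 V} (he₁ : e₁ ∈ G.edgeSet) (he₂ : e₂ ∈ G.edgeSet) (hne : e₁ ≠ e₂)
    (htwo : romanDom G < romanDom (G.deleteEdges {e₁, e₂})) : romanBondage G = 2 := by
  have hmem : 2 ∈ {k | ∃ B : Set (Sym2 V), B ⊆ G.edgeSet ∧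
      romanDom (G.deleteEdges B) > romanDom G ∧ B.ncard = k} :=
    ⟨_, Set.insert_subset he₁ (Set.singleton_subset_iff.2 he₂), htwo, Set.ncard_pair hne⟩
  refine le_antisymm (Nat.sInf_le hmem) (le_csInf ⟨2, hmem⟩ ?_)
  rintro k ⟨B, hB, hlt, rfl⟩
  by_contra! hk
  obtain rfl | ⟨e, rfl⟩ :=
    ((Set.ncard_le_one_iff_subsingleton (s := B)).1 (by omega)).eq_empty_or_singleton
  · simp at hlt
  · exact (hone e (hB rfl)).not_gt hlt

end RomanDomination

section Strip

def RowDominated (x y : ℕ → ℕ) (m : ℕ) : Prop :=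
  ∀ i < m, x i = 0 → y i = 2 ∨ x (i + 1) = 2 ∨ (i ≠ 0 ∧ x (i - 1) = 2)

theorem RowDominated.mono {x y : ℕ → ℕ} {m k : ℕ} (h : RowDominated x y m) (hkm : k ≤ m) :
    RowDominated x y k :=
  fun i hi => h i (by omega)

def twoCount (x y : ℕ → ℕ) (i : ℕ) : ℕ :=
  (if x i = 2 then 1 else 0) + (if y i = 2 then 1 else 0)

theorem two_mul_twoCount_le (x y : ℕ → ℕ) (i : ℕ) : 2 * twoCount x y i ≤ x i + y i := by
  unfold twoCount; split_ifs <;> omega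

theorem twoCount_le_two (x y : ℕ → ℕ) (i : ℕ) : twoCount x y i ≤ 2 := by
  unfold twoCount; split_ifs <;> omega

theorem twoCount_add_one_le_or {x y : ℕ → ℕ} {m : ℕ} (hx : RowDominated x y (m + 2))
    (hy : RowDominated y x (m + 2)) :
    twoCount x y (m + 1) + 1 ≤ x (m + 1) + y (m + 1) + twoCount x y (m + 2) ∨
      x m = 2 ∧ y m = 2 ∧ x (m + 1) + y (m + 1) + twoCount x y (m + 2) = 0 := by
  have hx' : x (m + 1) = 0 → y (m + 1) = 2 ∨ x (m + 2) = 2 ∨ x m = 2 := by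
    simpa using hx (m + 1) (by omega)
  have hy' : y (m + 1) = 0 → x (m + 1) = 2 ∨ y (m + 2) = 2 ∨ y m = 2 := by
    simpa using hy (m + 1) (by omega)
  unfold twoCount
  split_ifs <;> omega

theorem add_two_le_sum_add_twoCount {x y : ℕ → ℕ} (m : ℕ) (hx : RowDominated x y (m + 1))
    (hy : RowDominated y x (m + 1)) :
    m + 2 ≤ ∑ i ∈ range (m + 1), (x i + y i) + twoCount x y (m + 1) := by
  induction m using Nat.strong_induction_on with
  | _ m ih =>
  rcases m with _ | m
  · have hx₀ : x 0 = 0 → y 0 = 2 ∨ x 1 = 2 := by simpa using hx 0 one_pos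
    have hy₀ : y 0 = 0 → x 0 = 2 ∨ y 1 = 2 := by simpa using hy 0 one_pos
    simp only [twoCount, zero_add, sum_range_one]
    split_ifs <;> omega
  have ih₁ := ih m (by omega) (hx.mono (by omega)) (hy.mono (by omega))
  show m + 3 ≤ ∑ i ∈ range (m + 2), (x i + y i) + twoCount x y (m + 2)
  rw [sum_range_succ]
  rcases twoCount_add_one_le_or hx hy with hstep | ⟨hxm, hym, hzero⟩
  · omega
  -- The new column is empty, so column `m` dominates both its cells and weighs 4.
  rw [sum_range_succ, hxm, hym]
  rcases m with _ | m
  · omega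
  have ih₂ := ih m (by omega) (hx.mono (by omega)) (hy.mono (by omega))
  have := twoCount_le_two x y (m + 1)
  omega

end Strip

section Ladder

abbrev ladder (n : ℕ) : SimpleGraph (Fin 2 × Fin n) := pathGraph 2 □ pathGraph n

variable {n : ℕ}

theorem ladder_adj {v u : Fin 2 × Fin n} :
    (ladder n).Adj v u ↔
      v.1 = u.1 ∧ (v.2.val + 1 = u.2.val ∨ u.2.val + 1 = v.2.val) ∨
        v.2.val = u.2.val ∧ v.1 ≠ u.1 := by
  rw [boxProd_adj, pathGraph_adj, pathGraph_adj, Fin.val_inj]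
  have := v.1.isLt
  have := u.1.isLt
  constructor
  · rintro (⟨h₁, h₂⟩ | ⟨h₁, h₂⟩)
    · exact Or.inr ⟨h₂, by omega⟩
    · exact Or.inl ⟨h₂, h₁⟩
  · rintro (⟨h₁, h₂⟩ | ⟨h₁, h₂⟩)
    · exact Or.inr ⟨h₂, h₁⟩
    · exact Or.inl ⟨by omega, h₁⟩

-- Zero off the grid, so that a strip ending at the last column has nothing beyond it.
def gridRow (f : Fin 2 × Fin n → ℕ) (r : Fin 2) (j : ℕ) : ℕ :=
  if h : j < n then f (r, ⟨j, h⟩) else 0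

theorem gridRow_val (f : Fin 2 × Fin n → ℕ) (v : Fin 2 × Fin n) : gridRow f v.1 v.2 = f v :=
  dif_pos v.2.isLt

def columnWeight (f : Fin 2 × Fin n → ℕ) (j : ℕ) : ℕ := gridRow f 0 j + gridRow f 1 j

theorem sum_eq_sum_columnWeight (f : Fin 2 × Fin n → ℕ) :
    ∑ v, f v = ∑ j ∈ range n, columnWeight f j := by
  have hrow (r : Fin 2) : ∑ c : Fin n, f (r, c) = ∑ j ∈ range n, gridRow f r j := by
    rw [← Fin.sum_univ_eq_sum_range]
    exact sum_congr rfl fun c _ => (gridRow_val f (r, c)).symm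
  rw [Fintype.sum_prod_type, Fin.sum_univ_two, hrow, hrow, ← sum_add_distrib]
  rfl

theorem rowDominated_gridRow {H : SimpleGraph (Fin 2 × Fin n)} (hH : H ≤ ladder n)
    {f : Fin 2 × Fin n → ℕ} (hf : IsRDF H f) {c : ℕ}
    (hc : ∀ v u, H.Adj v u → c ≤ v.2.val → c ≤ u.2.val) {r r' : Fin 2} (hr : r ≠ r') :
    RowDominated (fun i => gridRow f r (c + i)) (fun i => gridRow f r' (c + i)) (n - c) := by
  intro i hi h₀
  dsimp only at h₀ ⊢
  have hv : c + i < n := by omega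
  obtain ⟨u, hvu, hu⟩ := hf.2 (r, ⟨c + i, hv⟩) ((dif_pos hv).symm.trans h₀)
  have hcu := hc _ _ hvu (Nat.le_add_right c i)
  rw [← gridRow_val f] at hu
  rcases ladder_adj.1 (hH hvu) with ⟨rfl, h | h⟩ | ⟨h, hne⟩ <;> dsimp only at h
  · exact Or.inr <| Or.inl <| by rwa [← Nat.add_assoc, h]
  · refine Or.inr <| Or.inr ⟨by omega, ?_⟩
    rwa [show c + (i - 1) = u.2.val by omega]
  · have : u.1 = r' := by dsimp only at hne; omega
    exact Or.inl <| by rwa [← this, h]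

theorem le_sum_columnWeight {H : SimpleGraph (Fin 2 × Fin n)} (hH : H ≤ ladder n)
    {f : Fin 2 × Fin n → ℕ} (hf : IsRDF H f) {c : ℕ} (hcn : c < n)
    (hc : ∀ v u, H.Adj v u → c ≤ v.2.val → c ≤ u.2.val) :
    n - c + 1 ≤ ∑ i ∈ range (n - c), columnWeight f (c + i) := by
  obtain ⟨m, hm⟩ : ∃ m, n - c = m + 1 := ⟨n - c - 1, by omega⟩
  have h₀₁ := rowDominated_gridRow hH hf hc (r := 0) (r' := 1) (by decide)
  have h₁₀ := rowDominated_gridRow hH hf hc (r := 1) (r' := 0) (by decide)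
  rw [hm] at h₀₁ h₁₀ ⊢
  have hbound := add_two_le_sum_add_twoCount m h₀₁ h₁₀
  have hout :
      twoCount (fun i => gridRow f 0 (c + i)) (fun i => gridRow f 1 (c + i)) (m + 1) = 0 := by
    simp [twoCount, gridRow, show ¬c + (m + 1) < n by omega]
  rwa [hout, add_zero] at hbound

end Ladder

section Pattern

variable {n : ℕ}

-- Rows alternate between consecutive 2-columns, so every column between two of them is
-- dominated in both rows.
def ladderSet (n σ π : ℕ) : Set (Fin 2 × Fin n) :=
  {v | v.2.val % 2 = π ∧ v.1.val = (σ + v.2.val / 2) % 2}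

theorem mem_ladderSet {σ π : ℕ} {v : Fin 2 × Fin n} :
    v ∈ ladderSet n σ π ↔ v.2.val % 2 = π ∧ v.1.val = (σ + v.2.val / 2) % 2 :=
  Iff.rfl

def budget (n π j : ℕ) : ℕ :=
  if j % 2 = π then 2 else if j = 0 ∨ j = n - 1 then 1 else 0

theorem sum_range_ite_mod_two {π : ℕ} (hπ : π < 2) (n : ℕ) :
    ∑ j ∈ range n, (if j % 2 = π then 2 else 0) = if π = 0 then n + n % 2 else n - n % 2 := by
  induction n with
  | zero => simp
  | succ m ih =>
    rw [sum_range_succ, ih]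
    split_ifs <;> omega

theorem sum_budget (hn : 2 ≤ n) {π : ℕ} (hπ : π < 2) : ∑ j ∈ range n, budget n π j = n + 1 := by
  have hsplit : ∀ j ∈ range n, budget n π j = (if j % 2 = π then 2 else 0) +
      ((if j = 0 then (if π = 0 then 0 else 1) else 0) +
        (if j = n - 1 then (if (n - 1) % 2 = π then 0 else 1) else 0)) := by
    intro j _
    unfold budget
    split_ifs <;> omega
  rw [sum_congr rfl hsplit, sum_add_distrib, sum_add_distrib, sum_ite_eq' (range n) 0,
    sum_ite_eq' (range n) (n - 1), if_pos (mem_range.2 (by omega)),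
    if_pos (mem_range.2 (by omega)), sum_range_ite_mod_two hπ]
  split_ifs <;> omega

theorem rdfOfSet_ladderSet_eq_zero_of_rung {σ π j : ℕ} (hj : j < n) {r r' : Fin 2}
    (hpar : j % 2 = π) (hr' : r'.val = (σ + j / 2) % 2) (hrr' : r ≠ r') :
    rdfOfSet (ladder n) (ladderSet n σ π) (r, ⟨j, hj⟩) = 0 :=
  rdfOfSet_eq_zero (u := (r', ⟨j, hj⟩)) (fun h => hrr' (Fin.ext (h.2.trans hr'.symm)))
    ⟨hpar, hr'⟩ (ladder_adj.2 (Or.inr ⟨rfl, hrr'⟩))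

theorem rdfOfSet_ladderSet_eq_zero_of_rail {σ π j k : ℕ} (hj : j < n) (hk : k < n)
    (hjk : j + 1 = k ∨ k + 1 = j) (hpar : j % 2 ≠ π) (hkπ : k % 2 = π) {r : Fin 2}
    (hr : r.val = (σ + k / 2) % 2) :
    rdfOfSet (ladder n) (ladderSet n σ π) (r, ⟨j, hj⟩) = 0 :=
  rdfOfSet_eq_zero (u := (r, ⟨k, hk⟩)) (fun h => hpar h.1) ⟨hkπ, hr⟩
    (ladder_adj.2 (Or.inl ⟨rfl, hjk⟩))

theorem columnWeight_le_budget (σ : ℕ) {π : ℕ} (hπ : π < 2) (hn : 2 ≤ n) {j : ℕ} (hj : j < n) :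
    columnWeight (rdfOfSet (ladder n) (ladderSet n σ π)) j ≤ budget n π j := by
  set f := rdfOfSet (ladder n) (ladderSet n σ π)
  have hw : columnWeight f j = f (0, ⟨j, hj⟩) + f (1, ⟨j, hj⟩) := by
    simp only [columnWeight, gridRow, dif_pos hj]
  have h₀ : f (0, ⟨j, hj⟩) ≤ 2 := (isRDF_rdfOfSet _ _).1 _
  have h₁ : f (1, ⟨j, hj⟩) ≤ 2 := (isRDF_rdfOfSet _ _).1 _
  rw [hw]
  unfold budget
  by_cases hpar : j % 2 = π
  · have h₀' (h : (σ + j / 2) % 2 = 1) : f (0, ⟨j, hj⟩) = 0 :=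
      rdfOfSet_ladderSet_eq_zero_of_rung (r' := 1) hj hpar h.symm (by decide)
    have h₁' (h : (σ + j / 2) % 2 = 0) : f (1, ⟨j, hj⟩) = 0 :=
      rdfOfSet_ladderSet_eq_zero_of_rung (r' := 0) hj hpar h.symm (by decide)
    rw [if_pos hpar]
    omega
  have h₀' : f (0, ⟨j, hj⟩) ≤ 1 := rdfOfSet_le_one fun h => hpar h.1
  have h₁' : f (1, ⟨j, hj⟩) ≤ 1 := rdfOfSet_le_one fun h => hpar h.1
  have hrail (k : ℕ) (hk : k < n) (hjk : j + 1 = k ∨ k + 1 = j) (hkπ : k % 2 = π) :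
      ((σ + k / 2) % 2 = 0 → f (0, ⟨j, hj⟩) = 0) ∧ ((σ + k / 2) % 2 = 1 → f (1, ⟨j, hj⟩) = 0) :=
    ⟨fun h => rdfOfSet_ladderSet_eq_zero_of_rail hj hk hjk hpar hkπ (r := 0) h.symm,
      fun h => rdfOfSet_ladderSet_eq_zero_of_rail hj hk hjk hpar hkπ (r := 1) h.symm⟩
  rw [if_neg hpar]
  split_ifs with hend
  · rcases hend with rfl | rfl
    · have := hrail 1 (by omega) (by omega) (by omega)
      omega
    · have := hrail (n - 2) (by omega) (by omega) (by omega)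
      omega
  · have := hrail (j - 1) (by omega) (by omega) (by omega)
    have := hrail (j + 1) (by omega) (by omega) (by omega)
    omega

end Pattern

section RomanBondage

variable {n : ℕ}

theorem sum_rdfOfSet_ladderSet_le (σ : ℕ) {π : ℕ} (hπ : π < 2) (hn : 2 ≤ n) :
    ∑ v, rdfOfSet (ladder n) (ladderSet n σ π) v ≤ n + 1 := by
  rw [sum_eq_sum_columnWeight, ← sum_budget hn hπ]
  exact sum_le_sum fun j hj => columnWeight_le_budget σ hπ hn (mem_range.1 hj)

theorem romanDom_ladder (hn : 2 ≤ n) : romanDom (ladder n) = n + 1 := by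
  refine le_antisymm ?_ (le_romanDom fun f hf => ?_)
  · exact (romanDom_le (isRDF_rdfOfSet _ _)).trans (sum_rdfOfSet_ladderSet_le 0 two_pos hn)
  · have := le_sum_columnWeight le_rfl hf (c := 0) (by omega) fun _ _ _ _ => Nat.zero_le _
    simpa [sum_eq_sum_columnWeight] using this

theorem exists_ladderSet_disjoint_edge {e : Sym2 (Fin 2 × Fin n)} (he : e ∈ (ladder n).edgeSet) :
    ∃ σ π, π < 2 ∧ ∀ v ∈ e, v ∉ ladderSet n σ π := by
  induction e using Sym2.ind with
  | _ v u =>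
  rw [mem_edgeSet] at he
  simp only [Sym2.mem_iff, mem_ladderSet]
  rcases ladder_adj.1 he with ⟨hrow, hcol⟩ | ⟨hcol, hrow⟩
  · have := congrArg Fin.val hrow
    refine ⟨v.1.val + 1 + min v.2.val u.2.val / 2, min v.2.val u.2.val % 2,
      Nat.mod_lt _ two_pos, ?_⟩
    rintro w (rfl | rfl) <;> omega
  · exact ⟨0, (v.2.val + 1) % 2, Nat.mod_lt _ two_pos, by rintro w (rfl | rfl) <;> omega⟩

theorem romanDom_deleteEdges_singleton_le (hn : 2 ≤ n) {e : Sym2 (Fin 2 × Fin n)}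
    (he : e ∈ (ladder n).edgeSet) : romanDom ((ladder n).deleteEdges {e}) ≤ n + 1 := by
  obtain ⟨σ, π, hπ, hdisj⟩ := exists_ladderSet_disjoint_edge he
  have hf := (isRDF_rdfOfSet (ladder n) (ladderSet n σ π)).deleteEdges (B := {e}) <| by
    rintro _ rfl v hv
    rw [Ne, rdfOfSet_eq_two_iff]
    exact hdisj v hv
  exact (romanDom_le hf).trans (sum_rdfOfSet_ladderSet_le σ hπ hn)

theorem add_two_le_romanDom_deleteEdges {a b : Fin n} (ha : a.val = 0) (hb : b.val = 1) :
    n + 2 ≤ romanDom ((ladder n).deleteEdges {s((0, a), (0, b)), s((1, a), (1, b))}) := by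
  set H := (ladder n).deleteEdges {s((0, a), (0, b)), s((1, a), (1, b))}
  have hleave (v u : Fin 2 × Fin n) (hvu : H.Adj v u) (hv : v.2 = a) : u.2 = a ∧ u.1 ≠ v.1 := by
    rw [deleteEdges_adj] at hvu
    rcases ladder_adj.1 hvu.1 with ⟨hrow, hcol⟩ | ⟨hcol, hrow⟩
    · refine absurd ?_ hvu.2
      have := congrArg Fin.val hv
      rw [show v = (v.1, a) from Prod.ext rfl hv,
        show u = (v.1, b) from Prod.ext hrow.symm (show u.2 = b from Fin.ext (by omega))]
      generalize v.1 = r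
      fin_cases r <;> simp
    · exact ⟨(Fin.ext hcol).symm.trans hv, Ne.symm hrow⟩
  have hpair (r r' : Fin 2) (hrr' : r ≠ r') (w : Fin 2 × Fin n) (hw : H.Adj (r, a) w) :
      w = (r', a) := by
    obtain ⟨hwa, hwr⟩ := hleave _ w hw rfl
    exact Prod.ext (by dsimp only at hwr ⊢; omega) hwa
  refine le_romanDom fun f hf => ?_
  have hfirst : 2 ≤ f (0, a) + f (1, a) :=
    hf.two_le_add (hpair 0 1 (by decide)) (hpair 1 0 (by decide))
  have hrest := le_sum_columnWeight (deleteEdges_le _) hf (c := 1) (by omega) fun v u hvu hv => by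
    by_contra hu
    have := congrArg Fin.val (hleave u v hvu.symm (Fin.ext (by omega))).1
    omega
  have hcol₀ : columnWeight f 0 = f (0, a) + f (1, a) := by
    rw [columnWeight, ← ha]
    exact congrArg₂ (· + ·) (gridRow_val f (0, a)) (gridRow_val f (1, a))
  rw [sum_eq_sum_columnWeight, range_eq_Ico, sum_eq_sum_Ico_succ_bot (by omega),
    sum_Ico_eq_sum_range, hcol₀]
  simp only [zero_add]
  omega

end RomanBondage

theorem stmt17 (n : ℕ) (hn : 2 ≤ n) :
    romanBondage (SimpleGraph.pathGraph 2 □ SimpleGraph.pathGraph n) = 2 := by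
  show romanBondage (ladder n) = 2
  let a : Fin n := ⟨0, by omega⟩
  let b : Fin n := ⟨1, by omega⟩
  have hrail (r : Fin 2) : s((r, a), (r, b)) ∈ (ladder n).edgeSet :=
    ladder_adj.2 (Or.inl ⟨rfl, Or.inl rfl⟩)
  refine romanBondage_eq_two (fun e he => ?_) (hrail 0) (hrail 1) (by simp) ?_
  · rw [romanDom_ladder hn]
    exact romanDom_deleteEdges_singleton_le hn he
  · have := add_two_le_romanDom_deleteEdges (a := a) (b := b) rfl rfl
    rw [romanDom_ladder hn]
    omega
end
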